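/- Let A be a unital complex *-algebra carrying a family of submultiplicative-type seminorm bounds: suppose φ is a positive sesquilinear invariant form (φ(ax,y) = φ(x,a*y)) that is continuous with respect to a seminorm p in the sense that φ(x,y) ≤ C p(x) p(y), and a ∈ A satisfies liminf_{n→∞} (p((a*a)^{2ⁿ}))^{2^{-n}} = γ_a < ∞. Suppose furthermore that right multiplication by b is p-continuous: p(xb) ≤ C_b p(x) for all x. Then φ(ab, ab) ≤ γ_a φ(b,b) for every b ∈ A. -/

import Mathlib

/-!
Put `c = a⋆a` and `H n = Re φ(b, c^(2ⁿ) b)`, so `H 0 = φ(ab, ab)`. Invariance moves half of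
`c^(2ⁿ⁺¹)` to the other side, `φ(c^(2ⁿ) b, c^(2ⁿ) b) = H (n + 1)`, and Cauchy–Schwarz gives
`H n ² ≤ φ(b, b) H (n + 1)`. Iterating and taking `2ⁿ⁺¹`-th roots yields Kaplansky's inequality
`φ(ab, ab) ≤ φ(b, b)^(1 - 2^-(n+1)) φ(c^(2ⁿ) b, c^(2ⁿ) b)^(2^-(n+1))`. The continuity assumptions
bound the last factor by `K p(c^(2ⁿ))²`; its `2^-(n+1)`-th root is `K^(2^-(n+1)) p(c^(2ⁿ))^(2^-n)`,
and since the coefficient `φ(b, b)^(1 - 2^-(n+1)) K^(2^-(n+1))` tends to `φ(b, b)`, passing to the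
liminf gives the claim.
-/

open Filter Topology

theorem pow_two_pow_le_of_sq_le {H : ℕ → ℝ} {s : ℝ} (hs : 0 ≤ s) (hH₀ : 0 ≤ H 0)
    (hH : ∀ n, H n ^ 2 ≤ s * H (n + 1)) (n : ℕ) : H 0 ^ 2 ^ n ≤ s ^ (2 ^ n - 1) * H n := by
  induction n with
  | zero => simp
  | succ n ih =>
    have hexp : 2 * (2 ^ n - 1) + 1 = 2 ^ (n + 1) - 1 := by
      have := Nat.one_le_two_pow (n := n); rw [pow_succ]; omega
    calc H 0 ^ 2 ^ (n + 1) = (H 0 ^ 2 ^ n) ^ 2 := by rw [pow_succ, pow_mul]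
      _ ≤ (s ^ (2 ^ n - 1) * H n) ^ 2 := by gcongr
      _ = s ^ (2 * (2 ^ n - 1)) * H n ^ 2 := by rw [mul_pow, ← pow_mul, mul_comm 2]
      _ ≤ s ^ (2 * (2 ^ n - 1)) * (s * H (n + 1)) := by gcongr; exact hH n
      _ = s ^ (2 ^ (n + 1) - 1) * H (n + 1) := by rw [← mul_assoc, ← pow_succ, hexp]

theorem le_rpow_mul_rpow_of_pow_le {x s y : ℝ} {N : ℕ} (hN : N ≠ 0) (hx : 0 ≤ x) (hs : 0 ≤ s)
    (hy : 0 ≤ y) (h : x ^ N ≤ s ^ (N - 1) * y) :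
    x ≤ s ^ (1 - (N : ℝ)⁻¹) * y ^ (N : ℝ)⁻¹ := by
  have hexp : ((N - 1 : ℕ) : ℝ) * (N : ℝ)⁻¹ = 1 - (N : ℝ)⁻¹ := by
    rw [Nat.cast_sub (Nat.one_le_iff_ne_zero.mpr hN)]
    field_simp
    simp
  calc x = (x ^ N) ^ (N : ℝ)⁻¹ := (Real.pow_rpow_inv_natCast hx hN).symm
    _ ≤ (s ^ (N - 1) * y) ^ (N : ℝ)⁻¹ := by gcongr
    _ = s ^ (1 - (N : ℝ)⁻¹) * y ^ (N : ℝ)⁻¹ := by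
      rw [Real.mul_rpow (by positivity) hy, ← Real.rpow_natCast_mul hs, hexp]

theorem le_rpow_mul_rpow_of_sq_le {H : ℕ → ℝ} {s : ℝ} (hs : 0 ≤ s) (hH₀ : ∀ n, 0 ≤ H n)
    (hH : ∀ n, H n ^ 2 ≤ s * H (n + 1)) (n : ℕ) :
    H 0 ≤ s ^ (1 - (2 : ℝ) ^ (-(n : ℝ))) * H n ^ (2 : ℝ) ^ (-(n : ℝ)) := by
  have h2n : (2 : ℝ) ^ (-(n : ℝ)) = ((2 ^ n : ℕ) : ℝ)⁻¹ := by
    rw [Real.rpow_neg zero_le_two, Real.rpow_natCast, Nat.cast_pow, Nat.cast_ofNat]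
  rw [h2n]
  exact le_rpow_mul_rpow_of_pow_le (by positivity) (hH₀ 0) hs (hH₀ n)
    (pow_two_pow_le_of_sq_le hs (hH₀ 0) hH n)

theorem le_mul_liminf_of_tendsto {u v : ℕ → ℝ} {L α : ℝ} (hv : Tendsto v atTop (𝓝 α))
    (hv₀ : ∀ n, 0 ≤ v n) (hu₀ : ∀ n, 0 ≤ u n) (hu : IsCoboundedUnder (· ≥ ·) atTop u)
    (h : ∀ n, L ≤ v n * u n) : L ≤ α * liminf u atTop := by
  set γ := liminf u atTop
  have hε : ∀ ε > 0, L ≤ (α + ε) * (γ + ε) := by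
    intro ε hε
    obtain ⟨n, hvn, hun⟩ := ((hv.eventually (gt_mem_nhds (lt_add_of_pos_right α hε))).and_frequently
      (frequently_lt_of_liminf_lt hu (lt_add_of_pos_right γ hε))).exists
    calc L ≤ v n * u n := h n
      _ ≤ (α + ε) * (γ + ε) := mul_le_mul hvn.le hun.le (hu₀ n) ((hv₀ n).trans hvn.le)
  have hlim : Tendsto (fun ε => (α + ε) * (γ + ε)) (𝓝[>] 0) (𝓝 (α * γ)) := by
    have hcont : ContinuousAt (fun ε : ℝ => (α + ε) * (γ + ε)) 0 := by fun_prop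
    simpa using hcont.tendsto.mono_left nhdsWithin_le_nhds
  exact ge_of_tendsto hlim (eventually_nhdsWithin_of_forall hε)

theorem norm_sq_le_re_mul_re {A : Type*} [AddCommGroup A] [Module ℂ A] (φ : A → A → ℂ)
    (hadd : ∀ x x' y : A, φ (x + x') y = φ x y + φ x' y)
    (hsmul : ∀ (c : ℂ) (x y : A), φ (c • x) y = starRingEnd ℂ c * φ x y)
    (hherm : ∀ x y : A, φ x y = starRingEnd ℂ (φ y x))
    (hpos : ∀ x : A, 0 ≤ (φ x x).re) (x y : A) :
    ‖φ x y‖ ^ 2 ≤ (φ x x).re * (φ y y).re := by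
  let _ : PreInnerProductSpace.Core ℂ A :=
    { inner := φ
      conj_inner_symm := fun x y => (hherm x y).symm
      re_inner_nonneg := hpos
      add_left := hadd
      smul_left := fun x y c => hsmul c x y }
  calc ‖φ x y‖ ^ 2 = ‖φ x y‖ * ‖φ y x‖ := by rw [hherm y x, Complex.norm_conj, sq]
    _ ≤ (φ x x).re * (φ y y).re := InnerProductSpace.Core.inner_mul_inner_self_le x y

theorem re_apply_mul_le_rpow_mul_rpow {A : Type*} [Ring A] [Algebra ℂ A] [StarRing A]
    (φ : A → A → ℂ)
    (hadd : ∀ x x' y : A, φ (x + x') y = φ x y + φ x' y)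
    (hsmul : ∀ (c : ℂ) (x y : A), φ (c • x) y = starRingEnd ℂ c * φ x y)
    (hherm : ∀ x y : A, φ x y = starRingEnd ℂ (φ y x))
    (hpos : ∀ x : A, 0 ≤ (φ x x).re)
    (hinv : ∀ a x y : A, φ (a * x) y = φ x (star a * y)) (a b : A) (n : ℕ) :
    (φ (a * b) (a * b)).re ≤ (φ b b).re ^ (1 - (2 : ℝ) ^ (-(n + 1 : ℝ))) *
      (φ ((star a * a) ^ 2 ^ n * b) ((star a * a) ^ 2 ^ n * b)).re ^ (2 : ℝ) ^ (-(n + 1 : ℝ)) := by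
  set c := star a * a
  set H : ℕ → ℝ := fun n => (φ b (c ^ 2 ^ n * b)).re
  have hsq : ∀ n, φ (c ^ 2 ^ n * b) (c ^ 2 ^ n * b) = φ b (c ^ 2 ^ (n + 1) * b) := fun n => by
    rw [hinv, ((IsSelfAdjoint.star_mul_self a).pow _).star_eq, ← mul_assoc, ← pow_add, ← two_mul,
      ← pow_succ']
  have hH₀ : H 0 = (φ (a * b) (a * b)).re := by simp only [H, c, hinv, pow_zero, pow_one, mul_assoc]
  have hnonneg : ∀ n, 0 ≤ H n
    | 0 => hH₀ ▸ hpos _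
    | n + 1 => by simp only [H, ← hsq]; exact hpos _
  have hstep : ∀ n, H n ^ 2 ≤ (φ b b).re * H (n + 1) := fun n => by
    calc H n ^ 2 = |H n| ^ 2 := (sq_abs _).symm
      _ ≤ ‖φ b (c ^ 2 ^ n * b)‖ ^ 2 := by gcongr; exact Complex.abs_re_le_norm _
      _ ≤ (φ b b).re * H (n + 1) := by
        simp only [H, ← hsq]; exact norm_sq_le_re_mul_re φ hadd hsmul hherm hpos _ _
  have := le_rpow_mul_rpow_of_sq_le (hpos b) hnonneg hstep (n + 1)
  rw [hH₀, Nat.cast_succ] at this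
  simpa only [H, hsq] using this

theorem exists_pos_re_apply_mul_self_le {A : Type*} [Mul A] (φ : A → A → ℂ) (p : A → ℝ)
    (hpnn : ∀ x : A, 0 ≤ p x) (C : ℝ) (hp : ∀ x y : A, ‖φ x y‖ ≤ C * (p x * p y)) {b : A}
    {Cb : ℝ} (hCb : ∀ x : A, p (x * b) ≤ Cb * p x) :
    ∃ K > 0, ∀ y : A, (φ (y * b) (y * b)).re ≤ K * p y ^ 2 := by
  refine ⟨|C| * Cb ^ 2 + 1, by positivity, fun y => ?_⟩
  have hyb : p (y * b) ^ 2 ≤ (Cb * p y) ^ 2 := pow_le_pow_left₀ (hpnn _) (hCb y) 2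
  calc (φ (y * b) (y * b)).re ≤ ‖φ (y * b) (y * b)‖ := Complex.re_le_norm _
    _ ≤ C * p (y * b) ^ 2 := by rw [sq]; exact hp _ _
    _ ≤ |C| * (Cb * p y) ^ 2 := by gcongr ?_ * ?_; exact le_abs_self C
    _ ≤ (|C| * Cb ^ 2 + 1) * p y ^ 2 := by nlinarith [sq_nonneg (p y)]

theorem stmt_9_general {A : Type*} [Ring A] [Algebra ℂ A] [StarRing A]
    (φ : A → A → ℂ)
    (hadd₁ : ∀ x x' y : A, φ (x + x') y = φ x y + φ x' y)
    (hsmul₁ : ∀ (c : ℂ) (x y : A), φ (c • x) y = starRingEnd ℂ c * φ x y)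
    (hherm : ∀ x y : A, φ x y = starRingEnd ℂ (φ y x))
    (hpos : ∀ x : A, 0 ≤ (φ x x).re ∧ (φ x x).im = 0)
    (hinv : ∀ a x y : A, φ (a * x) y = φ x (star a * y))
    (p : A → ℝ) (hpnn : ∀ x : A, 0 ≤ p x) (C : ℝ)
    (hp : ∀ x y : A, ‖φ x y‖ ≤ C * (p x * p y))
    (hpmul : ∀ b : A, ∃ Cb : ℝ, 0 < Cb ∧ ∀ x : A, p (x * b) ≤ Cb * p x)
    (a : A) (γa : ℝ)
    (hbdd : IsBoundedUnder (· ≤ ·) atTop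
      (fun n : ℕ => (p ((star a * a) ^ (2 ^ n))) ^ ((2 : ℝ) ^ (-(n : ℝ)))))
    (hγ : liminf (fun n : ℕ => (p ((star a * a) ^ (2 ^ n))) ^ ((2 : ℝ) ^ (-(n : ℝ)))) atTop = γa) :
    ∀ b : A, (φ (a * b) (a * b)).re ≤ γa * (φ b b).re := by
  intro b
  obtain ⟨Cb, -, hCb⟩ := hpmul b
  obtain ⟨K, hK₀, hK⟩ := exists_pos_re_apply_mul_self_le φ p hpnn C hp hCb
  set s := (φ b b).re
  set t : ℕ → ℝ := fun n => (2 : ℝ) ^ (-(n + 1 : ℝ))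
  have ht : Tendsto t atTop (𝓝 0) :=
    (tendsto_rpow_atBot_of_base_gt_one 2 one_lt_two).comp <| tendsto_neg_atTop_atBot.comp <|
      tendsto_atTop_add_const_right _ 1 tendsto_natCast_atTop_atTop
  have hv : Tendsto (fun n => s ^ (1 - t n) * K ^ t n) atTop (𝓝 s) := by
    have h1 := (tendsto_const_nhds (x := s)).rpow ((tendsto_const_nhds (x := (1 : ℝ))).sub ht)
      (Or.inr (by norm_num))
    simpa using h1.mul (tendsto_const_nhds.rpow ht (Or.inl hK₀.ne'))
  have hbound : ∀ n, (φ (a * b) (a * b)).re ≤ s ^ (1 - t n) * K ^ t n *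
      p ((star a * a) ^ 2 ^ n) ^ (2 : ℝ) ^ (-(n : ℝ)) := fun n => by
    have htwo : (2 : ℕ) * t n = (2 : ℝ) ^ (-(n : ℝ)) := by
      rw [show -(n : ℝ) = 1 + -(n + 1) by ring, Real.rpow_add two_pos, Real.rpow_one,
        Nat.cast_ofNat]
    calc (φ (a * b) (a * b)).re ≤ _ := re_apply_mul_le_rpow_mul_rpow φ hadd₁ hsmul₁ hherm
          (fun x => (hpos x).1) hinv a b n
      _ ≤ s ^ (1 - t n) * (K * p ((star a * a) ^ 2 ^ n) ^ 2) ^ t n := by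
          gcongr
          exacts [Real.rpow_nonneg (hpos b).1 _, (hpos _).1, hK _]
      _ = _ := by
          rw [Real.mul_rpow hK₀.le (by positivity), ← Real.rpow_natCast_mul (hpnn _), htwo,
            mul_assoc]
  rw [← hγ, mul_comm]
  exact le_mul_liminf_of_tendsto hv
    (fun n => mul_nonneg (Real.rpow_nonneg (hpos b).1 _) (Real.rpow_nonneg hK₀.le _))
    (fun n => Real.rpow_nonneg (hpnn _) _) hbdd.isCoboundedUnder_ge hbound

/-- If the invariant positive sesquilinear form `φ` is `p`-continuous,
right multiplications are `p`-continuous, and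
`γ_a = liminf (p((a*a)^{2ⁿ}))^{2^{-n}} < ∞`, then `φ(ab,ab) ≤ γ_a φ(b,b)` for all `b`. -/
theorem stmt_9 {A : Type*} [Ring A] [Algebra ℂ A] [StarRing A]
    (φ : A → A → ℂ)
    (hadd₁ : ∀ x x' y : A, φ (x + x') y = φ x y + φ x' y)
    (hadd₂ : ∀ x y y' : A, φ x (y + y') = φ x y + φ x y')
    (hsmul₁ : ∀ (c : ℂ) (x y : A), φ (c • x) y = starRingEnd ℂ c * φ x y)
    (hsmul₂ : ∀ (c : ℂ) (x y : A), φ x (c • y) = c * φ x y)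
    (hherm : ∀ x y : A, φ x y = starRingEnd ℂ (φ y x))
    (hpos : ∀ x : A, 0 ≤ (φ x x).re ∧ (φ x x).im = 0)
    (hinv : ∀ a x y : A, φ (a * x) y = φ x (star a * y))
    (p : A → ℝ) (hpnn : ∀ x : A, 0 ≤ p x) (C : ℝ)
    (hp : ∀ x y : A, ‖φ x y‖ ≤ C * (p x * p y))
    (hpmul : ∀ b : A, ∃ Cb : ℝ, 0 < Cb ∧ ∀ x : A, p (x * b) ≤ Cb * p x)
    (a : A) (γa : ℝ)
    (hbdd : IsBoundedUnder (· ≤ ·) atTop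
      (fun n : ℕ => (p ((star a * a) ^ (2 ^ n))) ^ ((2 : ℝ) ^ (-(n : ℝ)))))
    (hγ : liminf (fun n : ℕ => (p ((star a * a) ^ (2 ^ n))) ^ ((2 : ℝ) ^ (-(n : ℝ)))) atTop = γa) :
    ∀ b : A, (φ (a * b) (a * b)).re ≤ γa * (φ b b).re :=
  stmt_9_general φ hadd₁ hsmul₁ hherm hpos hinv p hpnn C hp hpmul a γa hbdd hγ
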